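/- In the key-renewal chain where each ephemeral key pair is valid for at most d time units and a new pair is generated before expiry, the compromise of the current session's pre-shared key does not allow derivation of any session key established strictly before the compromise time (perfect forward secrecy in the symbolic model with ephemeral DH values erased after use). -/

import Mathlib

/-- Symbolic messages for the PSK-DHE model: atoms (names of secrets such as the PSK
and the ephemeral exponents), pairs, group elements `gexp A` representing `g` raised
to the product of the atomic exponents in the finite set `A` (so `gexp ∅ = g`,
`gexp {x} = g^x`, `gexp {x, y} = g^(x·y)`), and `kdf a b` the key derived from `a`
and `b`. -/
inductive Msg where
  | atom : ℕ → Msg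
  | pair : Msg → Msg → Msg
  | gexp : Finset ℕ → Msg
  | kdf : Msg → Msg → Msg
deriving DecidableEq

/-- Dolev-Yao deduction with the symbolic Diffie-Hellman rule: `g` is public, and
`g^(x·y)` (more generally any further exponentiation) is derivable only from a known
group element together with a known exponent; `kdf` is derivable only from both of its
arguments. -/
inductive Knows : Set Msg → Msg → Prop where
  | mem {S m} : m ∈ S → Knows S m
  | pair_intro {S m n} : Knows S m → Knows S n → Knows S (Msg.pair m n)
  | fst {S m n} : Knows S (Msg.pair m n) → Knows S m
  | snd {S m n} : Knows S (Msg.pair m n) → Knows S n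
  | g_pub {S} : Knows S (Msg.gexp ∅)
  | dh {S A x} : Knows S (Msg.gexp A) → Knows S (Msg.atom x) →
      Knows S (Msg.gexp (insert x A))
  | kdf_intro {S a b} : Knows S a → Knows S b → Knows S (Msg.kdf a b)

/-- Session key of session `s`: `K_s = kdf(psk, g^(e_s · f_s))`. -/
def sessionKey (psk : ℕ) (e f : ℕ → ℕ) (s : ℕ) : Msg :=
  Msg.kdf (Msg.atom psk) (Msg.gexp {e s, f s})

/-- Adversary knowledge after a compromise revealing the pre-shared key: the PSK plus
all public DH transcripts `g^(e_s)`, `g^(f_s)` of every session. The ephemeral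
exponents `e_s`, `f_s` themselves were erased after use and are never available. -/
def postCompromiseKnowledge (psk : ℕ) (e f : ℕ → ℕ) : Set Msg :=
  insert (Msg.atom psk)
    { m | ∃ s, m = Msg.gexp {e s} ∨ m = Msg.gexp {f s} }

/-! An adversary can only ever derive public atoms, and the Diffie-Hellman rule only adds
known atoms to an exponent set; so if the initial knowledge contains no group element
whose exponent set holds both secrets `x` and `y`, neither does anything derivable from
it, and in particular `g^(x·y)` is never derived. -/

namespace Msg

def HidesDH (pub : Set ℕ) (x y : ℕ) : Msg → Prop
  | atom z => z ∈ pub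
  | pair m n => m.HidesDH pub x y ∧ n.HidesDH pub x y
  | gexp A => x ∉ A ∨ y ∉ A
  | kdf a b => a.HidesDH pub x y ∧ b.HidesDH pub x y

end Msg

theorem Knows.hidesDH {pub : Set ℕ} {x y : ℕ} (hx : x ∉ pub) (hy : y ∉ pub) {S : Set Msg}
    (hS : ∀ m ∈ S, m.HidesDH pub x y) {m : Msg} (h : Knows S m) : m.HidesDH pub x y := by
  induction h with
  | mem hm => exact hS _ hm
  | pair_intro _ _ ihm ihn => exact ⟨ihm, ihn⟩
  | fst _ ih => exact ih.1
  | snd _ ih => exact ih.2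
  | g_pub => exact Or.inl (Finset.notMem_empty x)
  | @dh A z _ _ ihA ihz =>
    have hzx : z ≠ x := ne_of_mem_of_not_mem ihz hx
    have hzy : z ≠ y := ne_of_mem_of_not_mem ihz hy
    simp only [Msg.HidesDH, Finset.mem_insert, not_or]
    exact ihA.imp (⟨hzx.symm, ·⟩) (⟨hzy.symm, ·⟩)
  | kdf_intro _ _ iha ihb => exact ⟨iha, ihb⟩

theorem hidesDH_of_mem_postCompromiseKnowledge {psk : ℕ} {e f : ℕ → ℕ}
    (hef : ∀ a b, e a ≠ f b) (s : ℕ) :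
    ∀ m ∈ postCompromiseKnowledge psk e f, m.HidesDH {psk} (e s) (f s) := by
  rintro m (rfl | ⟨t, rfl | rfl⟩)
  · exact Set.mem_singleton psk
  · exact Or.inr (Finset.notMem_singleton.mpr (hef t s).symm)
  · exact Or.inl (Finset.notMem_singleton.mpr (hef s t))

theorem not_hidesDH_sessionKey (pub : Set ℕ) (psk : ℕ) (e f : ℕ → ℕ) (s : ℕ) :
    ¬ (sessionKey psk e f s).HidesDH pub (e s) (f s) := by
  simp [sessionKey, Msg.HidesDH]

theorem perfect_forward_secrecy_general
    (psk : ℕ) (e f : ℕ → ℕ)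
    (hef : ∀ a b, e a ≠ f b)
    (hpe : ∀ a, e a ≠ psk) (hpf : ∀ a, f a ≠ psk)
    (s : ℕ) :
    ¬ Knows (postCompromiseKnowledge psk e f) (sessionKey psk e f s) := fun h =>
  not_hidesDH_sessionKey {psk} psk e f s <|
    h.hidesDH (Set.notMem_singleton_iff.mpr (hpe s)) (Set.notMem_singleton_iff.mpr (hpf s))
      (hidesDH_of_mem_postCompromiseKnowledge hef s)

/-- **Perfect forward secrecy (symbolic model).** Let the ephemeral exponents
`e_s, f_s` be pairwise-distinct fresh atoms, distinct from the PSK, erased after each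
session. Even if the adversary compromises the pre-shared key at session `c` and holds
all public transcripts, it cannot derive the session key of any session `s`
established strictly before the compromise: the symbolic DH rule yields `g^(e_s·f_s)`
only from `g^(e_s)` and `f_s` (or `g^(f_s)` and `e_s`), which are unavailable. -/
theorem perfect_forward_secrecy
    (psk : ℕ) (e f : ℕ → ℕ)
    (he : Function.Injective e) (hf : Function.Injective f)
    (hef : ∀ a b, e a ≠ f b)
    (hpe : ∀ a, e a ≠ psk) (hpf : ∀ a, f a ≠ psk)
    (c : ℕ) (s : ℕ) (hs : s < c) :
    ¬ Knows (postCompromiseKnowledge psk e f) (sessionKey psk e f s) :=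
  perfect_forward_secrecy_general psk e f hef hpe hpf s
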